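/- arXiv:1409.3869 — 6 statements merged into one kernel-verified Lean document; each statement's English description precedes it below -/
import Mathlib

section
/- For all n and 1 ≤ k ≤ n, T(2,n;k) = ∑_{r=1}^{k} 2^r · C(k-1, r-1) · C(n-k+1, r), where C denotes the binomial coefficient. -/
/-- Two grid squares (given as (row, column) pairs) are adjacent if they agree in one
coordinate and differ by one in the other. -/
def Adj (p q : ℕ × ℕ) : Prop :=
  (p.1 = q.1 ∧ (p.2 + 1 = q.2 ∨ q.2 + 1 = p.2)) ∨
  (p.2 = q.2 ∧ (p.1 + 1 = q.1 ∨ q.1 + 1 = p.1))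

instance : DecidableRel Adj := fun _ _ => by unfold Adj; infer_instance

/-- `T m n k` is the number of ways to select `k` squares from an `m × n` grid with
no two selected squares horizontally or vertically adjacent. -/
def T (m n k : ℕ) : ℕ :=
  (((Finset.range m ×ˢ Finset.range n).powersetCard k).filter
    (fun s => ∀ p ∈ s, ∀ q ∈ s, ¬ Adj p q)).card

/-!
Cut the grid after its last column `n`. An independent set either avoids that column, or
contains exactly one of its two cells, and reflecting the rows shows both cells occur equally
often; removing the top cell `(0, n)` leaves an independent set of the shorter grid avoiding
`(0, n - 1)`. Together these give `T(n+2, k+1) = T(n+1, k+1) + T(n+1, k) + T(n, k)`, and the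
binomial sum obeys the same recurrence by two applications of Pascal's rule, with matching
boundary values `T(n, 1) = 2n` and `T(n, n+1) = 0`.
-/

open Finset

lemma not_adj_self (p : ℕ × ℕ) : ¬ Adj p p := by
  unfold Adj; omega

theorem T_one (m n : ℕ) : T m n 1 = m * n := by
  rw [T, powersetCard_one, filter_true_of_mem, card_map, card_product, card_range, card_range]
  rintro _ hs
  obtain ⟨p, -, rfl⟩ := mem_map.1 hs
  simp [not_adj_self]

namespace TwoRowGrid

abbrev IsIndep (s : Finset (ℕ × ℕ)) : Prop := ∀ p ∈ s, ∀ q ∈ s, ¬ Adj p q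

def grid (n : ℕ) : Finset (ℕ × ℕ) := range 2 ×ˢ range n

def indep (n k : ℕ) : Finset (Finset (ℕ × ℕ)) := {s ∈ (grid n).powersetCard k | IsIndep s}

lemma T_two_eq_card (n k : ℕ) : T 2 n k = #(indep n k) := rfl

lemma mem_grid {n : ℕ} {p : ℕ × ℕ} : p ∈ grid n ↔ p.1 < 2 ∧ p.2 < n := by
  simp [grid]

lemma mem_indep {n k : ℕ} {s : Finset (ℕ × ℕ)} :
    s ∈ indep n k ↔ s ⊆ grid n ∧ #s = k ∧ IsIndep s := by
  simp only [indep, mem_filter, mem_powersetCard, and_assoc]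

lemma IsIndep.mono {s t : Finset (ℕ × ℕ)} (ht : IsIndep t) (hst : s ⊆ t) : IsIndep s :=
  fun p hp q hq => ht p (hst hp) q (hst hq)

lemma IsIndep.insert {s : Finset (ℕ × ℕ)} {a : ℕ × ℕ} (hs : IsIndep s)
    (ha : ∀ q ∈ s, ¬ Adj a q ∧ ¬ Adj q a) : IsIndep (insert a s) := by
  simp only [IsIndep, mem_insert, forall_eq_or_imp]
  refine ⟨⟨not_adj_self a, fun q hq => (ha q hq).1⟩, fun p hp => ⟨(ha p hp).2, hs p hp⟩⟩

lemma card_le_of_mem_indep {n k : ℕ} {s : Finset (ℕ × ℕ)} (hs : s ∈ indep n k) :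
    k ≤ n := by
  obtain ⟨hsub, rfl, hind⟩ := mem_indep.1 hs
  -- two cells of one column are adjacent, so an independent set meets each column at most once
  simpa using card_le_card_of_injOn Prod.snd (t := range n)
    (fun p hp => mem_range.2 (mem_grid.1 (hsub hp)).2)
    (fun p hp q hq hpq => by
      have := mem_grid.1 (hsub hp); have := mem_grid.1 (hsub hq)
      by_contra hne
      exact hind p hp q hq (Or.inr ⟨hpq, by grind⟩))

lemma T_two_eq_zero {n k : ℕ} (h : n < k) : T 2 n k = 0 :=
  card_eq_zero.2 <| eq_empty_of_forall_notMem fun _ hs => (card_le_of_mem_indep hs).not_gt h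

lemma grid_mono {m n : ℕ} (h : m ≤ n) : grid m ⊆ grid n :=
  product_subset_product_right (range_subset_range.2 h)

lemma subset_grid_of_subset_grid_succ {n : ℕ} {s : Finset (ℕ × ℕ)} (hs : s ⊆ grid (n + 1))
    (h₀ : (0, n) ∉ s) (h₁ : (1, n) ∉ s) : s ⊆ grid n := by
  rintro ⟨r, c⟩ hp
  obtain ⟨hr, hc⟩ := mem_grid.1 (hs hp)
  refine mem_grid.2 ⟨hr, lt_of_le_of_ne (Nat.le_of_lt_succ hc) ?_⟩
  rintro rfl
  interval_cases r <;> contradiction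

def rowSwap : Equiv.Perm (ℕ × ℕ) := Equiv.prodCongr (Equiv.swap 0 1) (Equiv.refl ℕ)

lemma rowSwap_apply (p : ℕ × ℕ) : rowSwap p = (Equiv.swap 0 1 p.1, p.2) := rfl

lemma rowSwap_symm : rowSwap.symm = rowSwap := by
  ext p <;> simp [rowSwap]

lemma rowSwap_mem_grid {n : ℕ} {p : ℕ × ℕ} (hp : p ∈ grid n) : rowSwap p ∈ grid n := by
  obtain ⟨r, c⟩ := p
  obtain ⟨hr, hc⟩ := mem_grid.1 hp
  interval_cases r <;> simpa [rowSwap_apply, mem_grid] using hc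

lemma adj_rowSwap {p q : ℕ × ℕ} (hp : p.1 < 2) (hq : q.1 < 2) :
    Adj (rowSwap p) (rowSwap q) ↔ Adj p q := by
  obtain ⟨r, c⟩ := p
  obtain ⟨r', c'⟩ := q
  dsimp only at hp hq
  interval_cases r <;> interval_cases r' <;> simp [rowSwap_apply, Adj]

lemma map_rowSwap_mem_indep {n k : ℕ} {s : Finset (ℕ × ℕ)} (hs : s ∈ indep n k) :
    s.map rowSwap.toEmbedding ∈ indep n k := by
  obtain ⟨hsub, rfl, hind⟩ := mem_indep.1 hs
  refine mem_indep.2 ⟨?_, card_map _, ?_⟩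
  · simp only [subset_iff, forall_mem_map]
    exact fun p hp => rowSwap_mem_grid (hsub hp)
  · simp only [IsIndep, forall_mem_map]
    intro p hp q hq
    simpa [adj_rowSwap (mem_grid.1 (hsub hp)).1 (mem_grid.1 (hsub hq)).1] using hind p hp q hq

lemma map_rowSwap_map_rowSwap (s : Finset (ℕ × ℕ)) :
    (s.map rowSwap.toEmbedding).map rowSwap.toEmbedding = s := by
  ext p; simp [mem_map_equiv, rowSwap_symm]

lemma card_filter_top_eq_card_filter_bottom (n k c : ℕ) :
    #{s ∈ indep n k | (0, c) ∈ s} = #{s ∈ indep n k | (1, c) ∈ s} := by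
  refine card_nbij' (·.map rowSwap.toEmbedding) (·.map rowSwap.toEmbedding) ?_ ?_
    (fun s _ => map_rowSwap_map_rowSwap s) (fun s _ => map_rowSwap_map_rowSwap s) <;>
  · intro s hs
    simp only [coe_filter] at hs ⊢
    refine ⟨map_rowSwap_mem_indep hs.1, ?_⟩
    simpa [mem_map_equiv, rowSwap_symm, rowSwap_apply] using hs.2

lemma card_indep_succ (n k : ℕ) :
    #(indep (n + 1) k) = #(indep n k) + 2 * #{s ∈ indep (n + 1) k | (0, n) ∈ s} := by
  have hdisj :
      Disjoint {s ∈ indep (n + 1) k | (0, n) ∈ s} {s ∈ indep (n + 1) k | (1, n) ∈ s} :=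
    disjoint_filter.2 fun s hs h₀ h₁ =>
      (mem_indep.1 hs).2.2 _ h₀ _ h₁ (Or.inr ⟨rfl, Or.inl rfl⟩)
  have hrest : {s ∈ indep (n + 1) k | ¬((0, n) ∈ s ∨ (1, n) ∈ s)} = indep n k := by
    ext s
    simp only [mem_filter, mem_indep, not_or]
    constructor
    · rintro ⟨⟨hsub, hcard, hind⟩, h₀, h₁⟩
      exact ⟨subset_grid_of_subset_grid_succ hsub h₀ h₁, hcard, hind⟩
    · rintro ⟨hsub, hcard, hind⟩
      exact ⟨⟨hsub.trans (grid_mono n.le_succ), hcard, hind⟩,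
        fun h => by simpa [mem_grid] using hsub h, fun h => by simpa [mem_grid] using hsub h⟩
  rw [← card_filter_add_card_filter_not (p := fun s => (0, n) ∈ s ∨ (1, n) ∈ s), filter_or,
    card_union_of_disjoint hdisj, hrest, ← card_filter_top_eq_card_filter_bottom]
  ring

lemma card_filter_top_succ (n k : ℕ) :
    #{s ∈ indep (n + 2) (k + 1) | (0, n + 1) ∈ s} =
      #{s ∈ indep (n + 1) k | (0, n) ∉ s} := by
  have corner_notMem {s : Finset (ℕ × ℕ)} (hs : s ⊆ grid (n + 1)) : (0, n + 1) ∉ s :=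
    fun h => by simpa [mem_grid] using hs h
  refine card_nbij' (·.erase (0, n + 1)) (insert (0, n + 1)) ?_ ?_
    (fun s hs => insert_erase (mem_filter.1 hs).2)
    (fun s hs => erase_insert (corner_notMem (mem_indep.1 (mem_filter.1 hs).1).1))
  · intro s hs
    simp only [coe_filter, mem_indep] at hs ⊢
    obtain ⟨⟨hsub, hcard, hind⟩, htop⟩ := hs
    refine ⟨⟨subset_grid_of_subset_grid_succ ((erase_subset _ _).trans hsub) (notMem_erase _ _)
        fun h => hind _ htop _ (mem_of_mem_erase h) (Or.inr ⟨rfl, Or.inl rfl⟩),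
      by rw [card_erase_of_mem htop, hcard, Nat.add_sub_cancel], hind.mono (erase_subset _ _)⟩,
      fun h => hind _ (mem_of_mem_erase h) _ htop (Or.inl ⟨rfl, Or.inl rfl⟩)⟩
  · intro s hs
    simp only [coe_filter, mem_indep] at hs ⊢
    obtain ⟨⟨hsub, hcard, hind⟩, hnotMem⟩ := hs
    refine ⟨⟨insert_subset (by simp [mem_grid]) (hsub.trans (grid_mono (by omega))),
      by rw [card_insert_of_notMem (corner_notMem hsub), hcard], hind.insert ?_⟩,
      mem_insert_self _ _⟩
    rintro ⟨r, c⟩ hq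
    have := mem_grid.1 (hsub hq)
    have : ¬(r = 0 ∧ c = n) := by rintro ⟨rfl, rfl⟩; exact hnotMem hq
    simp only [Adj] at *
    omega

theorem T_two_add_two (n k : ℕ) :
    T 2 (n + 2) (k + 1) = T 2 (n + 1) (k + 1) + T 2 (n + 1) k + T 2 n k := by
  have h₁ := card_indep_succ (n + 1) (k + 1)
  have h₂ := card_indep_succ n k
  have h₃ := card_filter_add_card_filter_not (s := indep (n + 1) k) (p := fun s => (0, n) ∈ s)
  rw [← card_filter_top_succ] at h₃
  simp only [add_assoc, Nat.reduceAdd] at h₁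
  simp only [T_two_eq_card]
  omega

end TwoRowGrid

/-- `chooseSum a M 1` is the sum of the theorem with `k = a + 1` and `n - k + 1 = M`; the shift `j`
is what makes Pascal's rule in either argument close up. -/
def chooseSum (a M j : ℕ) : ℕ :=
  ∑ s ∈ range (a + 1), 2 ^ (s + 1) * a.choose s * M.choose (s + j)

lemma chooseSum_succ_right (a M j : ℕ) :
    chooseSum a (M + 1) (j + 1) = chooseSum a M (j + 1) + chooseSum a M j := by
  rw [chooseSum, chooseSum, chooseSum, ← sum_add_distrib]
  refine sum_congr rfl fun s _ => ?_
  rw [← add_assoc, Nat.choose_succ_succ']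
  ring

lemma chooseSum_succ_left (a M j : ℕ) :
    chooseSum (a + 1) M j = chooseSum a M j + 2 * chooseSum a M (j + 1) := by
  have extend :
      chooseSum a M j = ∑ s ∈ range (a + 2), 2 ^ (s + 1) * a.choose s * M.choose (s + j) := by
    rw [chooseSum, sum_range_succ _ (a + 1), Nat.choose_succ_self, mul_zero, zero_mul, add_zero]
  rw [extend, chooseSum, chooseSum, sum_range_succ', sum_range_succ' _ (a + 1), mul_sum,
    add_right_comm, ← sum_add_distrib]
  congr 1
  · refine sum_congr rfl fun s _ => ?_
    rw [Nat.choose_succ_succ', add_right_comm s 1 j, ← add_assoc]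
    ring
  · simp

lemma chooseSum_succ_succ (a M j : ℕ) :
    chooseSum (a + 1) (M + 1) j =
      chooseSum (a + 1) M j + chooseSum a (M + 1) j + chooseSum a M j := by
  rw [chooseSum_succ_left a (M + 1), chooseSum_succ_left a M, chooseSum_succ_right]
  ring

lemma chooseSum_zero_left (M j : ℕ) : chooseSum 0 M j = 2 * M.choose j := by
  simp [chooseSum]

lemma chooseSum_zero_succ (a j : ℕ) : chooseSum a 0 (j + 1) = 0 := by
  simp [chooseSum, ← add_assoc]

lemma chooseSum_eq_sum_Icc (a M : ℕ) :
    chooseSum a M 1 = ∑ r ∈ Icc 1 (a + 1), 2 ^ r * a.choose (r - 1) * M.choose r := by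
  rw [chooseSum, ← Ico_add_one_right_eq_Icc, sum_Ico_eq_sum_range, Nat.add_sub_cancel]
  refine sum_congr rfl fun s _ => ?_
  rw [add_comm 1 s, Nat.add_sub_cancel]

open TwoRowGrid in
theorem T_two_add_add_one (a M : ℕ) : T 2 (a + M) (a + 1) = chooseSum a M 1 := by
  induction a generalizing M with
  | zero => rw [T_one, chooseSum_zero_left, Nat.choose_one_right, zero_add]
  | succ a iha =>
    induction M with
    | zero => rw [T_two_eq_zero (by omega), chooseSum_zero_succ]
    | succ M ihM =>
      have := T_two_add_two (a + M) (a + 1)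
      rw [show a + 1 + (M + 1) = a + M + 2 by omega, this, show a + M + 1 = a + 1 + M by omega,
        ihM, show a + 1 + M = a + (M + 1) by omega, iha, iha, chooseSum_succ_succ]

theorem T2_formula (n k : ℕ) (hk : 1 ≤ k) (hkn : k ≤ n) :
    T 2 n k = ∑ r ∈ Finset.Icc 1 k, 2 ^ r * Nat.choose (k - 1) (r - 1) * Nat.choose (n - k + 1) r := by
  obtain ⟨a, rfl⟩ := Nat.exists_eq_add_of_le' hk
  obtain ⟨M, rfl⟩ : ∃ M, n = a + M := ⟨n - a, by omega⟩
  rw [T_two_add_add_one, chooseSum_eq_sum_Icc, Nat.add_sub_cancel,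
    show a + M - (a + 1) + 1 = M by omega]
end

section
/- Define Δ(k,r) = C(k-1,r-1)·C(k,r) - C(k-2,r-1)·C(k+1,r). If 1 ≤ r ≤ ⌊k/2⌋, then Δ(k,r) < 0. -/
/-- `Δ k r = C(k-1,r-1)·C(k,r) - C(k-2,r-1)·C(k+1,r)` as an integer. -/
def Δ (k r : ℕ) : ℤ :=
  (Nat.choose (k - 1) (r - 1) * Nat.choose k r : ℤ) -
    (Nat.choose (k - 2) (r - 1) * Nat.choose (k + 1) r : ℤ)

/- With `k = n + 2` and `r = s + 1`, the ratio identities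
`C(n,s)(n+1) = C(n+1,s)(n+1-s)` and `C(n+2,s+1)(n+3) = C(n+3,s+1)(n+2-s)` show that the two
products in `Δ` differ by the factor `(n+1)(n+2-s) / ((n+1-s)(n+3))`, which is `< 1` exactly when
`2s ≤ n`. -/

namespace Nat

theorem choose_mul_choose_mul_eq (n s : ℕ) :
    (n + 1).choose s * (n + 2).choose (s + 1) * ((n + 1 - s) * (n + 3)) =
      n.choose s * (n + 3).choose (s + 1) * ((n + 1) * (n + 2 - s)) := by
  have h₁ := choose_mul_succ_eq n s
  have h₂ := choose_mul_succ_eq (n + 2) (s + 1)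
  rw [show n + 2 + 1 - (s + 1) = n + 2 - s by omega] at h₂
  calc (n + 1).choose s * (n + 2).choose (s + 1) * ((n + 1 - s) * (n + 3))
      = ((n + 1).choose s * (n + 1 - s)) * ((n + 2).choose (s + 1) * (n + 3)) := by ring
    _ = (n.choose s * (n + 1)) * ((n + 3).choose (s + 1) * (n + 2 - s)) := by rw [h₁, h₂]
    _ = n.choose s * (n + 3).choose (s + 1) * ((n + 1) * (n + 2 - s)) := by ring

theorem choose_mul_choose_lt {n s : ℕ} (h : 2 * s ≤ n) :
    (n + 1).choose s * (n + 2).choose (s + 1) < n.choose s * (n + 3).choose (s + 1) := by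
  have hfactor : (n + 1) * (n + 2 - s) < (n + 1 - s) * (n + 3) := by
    obtain ⟨m, rfl⟩ := exists_add_of_le h
    rw [show 2 * s + m + 2 - s = s + m + 2 by omega, show 2 * s + m + 1 - s = s + m + 1 by omega]
    nlinarith
  have hpos : 0 < n.choose s * (n + 3).choose (s + 1) :=
    Nat.mul_pos (choose_pos (by omega)) (choose_pos (by omega))
  refine Nat.lt_of_mul_lt_mul_right (a := (n + 1 - s) * (n + 3)) ?_
  rw [choose_mul_choose_mul_eq]
  exact Nat.mul_lt_mul_of_pos_left hfactor hpos

end Nat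

theorem delta_neg_general (k r : ℕ) (hr : 1 ≤ r) (hrk : r ≤ k / 2) :
    Δ k r < 0 := by
  obtain ⟨s, rfl⟩ := exists_add_of_le hr
  obtain ⟨n, rfl⟩ : ∃ n, k = n + 2 := ⟨k - 2, by omega⟩
  have hlt := Nat.choose_mul_choose_lt (n := n) (s := s) (by omega)
  rw [Δ, sub_neg]
  simp only [add_tsub_cancel_right, show n + 2 - 1 = n + 1 by omega,
    show n + 2 + 1 = n + 3 by omega, add_comm 1 s]
  exact_mod_cast hlt

theorem delta_neg (k r : ℕ) (hk : 2 ≤ k) (hr : 1 ≤ r) (hrk : r ≤ k / 2) :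
    Δ k r < 0 :=
  delta_neg_general k r hr hrk
end

section
/- For all 1 ≤ r ≤ k, C(k-1,r-1)·C(k+1,r) - C(k,r-1)·C(k,r) > 0. -/
/-! Both products are multiples of `C(k, r-1) * C(k, r)`: from `k * C(k-1, r-1) = r * C(k, r)` and
`r * C(k+1, r) = (k+1) * C(k, r-1)` one gets `k * C(k-1, r-1) * C(k+1, r) = (k+1) * C(k, r-1) * C(k, r)`,
so `k` times the difference equals `C(k, r-1) * C(k, r)`, which is positive for `r ≤ k`. -/

namespace Nat

theorem add_one_mul_choose_mul_choose_add_two (n m : ℕ) :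
    (n + 1) * (choose n m * choose (n + 2) (m + 1)) =
      (n + 2) * (choose (n + 1) m * choose (n + 1) (m + 1)) := by
  have hlower := add_one_mul_choose_eq n m
  have hupper := add_one_mul_choose_eq (n + 1) m
  apply Nat.eq_of_mul_eq_mul_right m.succ_pos
  calc (n + 1) * (choose n m * choose (n + 2) (m + 1)) * (m + 1)
      = ((n + 1) * choose n m) * (choose (n + 2) (m + 1) * (m + 1)) := by ring
    _ = (choose (n + 1) (m + 1) * (m + 1)) * ((n + 1 + 1) * choose (n + 1) m) := by
        rw [hlower, ← hupper]
    _ = (n + 2) * (choose (n + 1) m * choose (n + 1) (m + 1)) * (m + 1) := by ring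

theorem add_one_mul_sub_choose_mul_choose (n m : ℕ) :
    (n + 1) * ((choose n m * choose (n + 2) (m + 1) : ℤ) -
        choose (n + 1) m * choose (n + 1) (m + 1)) =
      choose (n + 1) m * choose (n + 1) (m + 1) := by
  have h := congrArg (Nat.cast : ℕ → ℤ) (add_one_mul_choose_mul_choose_add_two n m)
  push_cast at h
  linear_combination h

end Nat

theorem choose_product_pos (k r : ℕ) (hr : 1 ≤ r) (hrk : r ≤ k) :
    0 < (Nat.choose (k - 1) (r - 1) * Nat.choose (k + 1) r : ℤ) -
        (Nat.choose k (r - 1) * Nat.choose k r : ℤ) := by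
  obtain ⟨m, rfl⟩ := Nat.exists_eq_add_of_le' hr
  obtain ⟨n, rfl⟩ := Nat.exists_eq_add_of_le' (hr.trans hrk)
  have hprod : (0 : ℤ) < Nat.choose (n + 1) m * Nat.choose (n + 1) (m + 1) := by
    exact_mod_cast Nat.mul_pos (Nat.choose_pos (Nat.le_of_succ_le hrk)) (Nat.choose_pos hrk)
  rw [← Nat.add_one_mul_sub_choose_mul_choose n m] at hprod
  simpa using pos_of_mul_pos_right hprod (by positivity)
end

section
/- For all k ≥ 1, T(2,2k;k) > T(2,2k;k+1). -/
section IndepSets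

variable {α : Type*} {r : α → α → Prop} [DecidableRel r]

variable (r) in
def indepSets (A : Finset α) (k : ℕ) : Finset (Finset α) :=
  (A.powersetCard k).filter fun s => ∀ p ∈ s, ∀ q ∈ s, ¬ r p q

lemma mem_indepSets {A s : Finset α} {k : ℕ} :
    s ∈ indepSets r A k ↔ (s ⊆ A ∧ s.card = k) ∧ ∀ p ∈ s, ∀ q ∈ s, ¬ r p q := by
  rw [indepSets, Finset.mem_filter, Finset.mem_powersetCard]

variable [DecidableEq α]

lemma indepSets_erase (A : Finset α) (p : α) (k : ℕ) :
    indepSets r (A.erase p) k = (indepSets r A k).filter (p ∉ ·) := by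
  ext s
  simp only [mem_indepSets, Finset.mem_filter, Finset.subset_erase]
  tauto

lemma card_filter_mem_indepSets_succ {A : Finset α} {p : α} (hpA : p ∈ A) (hpp : ¬ r p p)
    (k : ℕ) :
    ((indepSets r A (k + 1)).filter (p ∈ ·)).card =
      (indepSets r (A.filter fun a => a ≠ p ∧ ¬ r a p ∧ ¬ r p a) k).card := by
  refine Finset.card_nbij' (·.erase p) (insert p) ?_ ?_ ?_ ?_
  · intro s hs
    rw [Finset.mem_coe, Finset.mem_filter, mem_indepSets] at hs
    obtain ⟨⟨⟨hsA, hcard⟩, hindep⟩, hps⟩ := hs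
    simp only [Finset.mem_coe, mem_indepSets, Finset.card_erase_of_mem hps, hcard]
    refine ⟨⟨fun a ha => ?_, rfl⟩, fun a ha b hb => hindep a (Finset.mem_of_mem_erase ha) b
      (Finset.mem_of_mem_erase hb)⟩
    have has := Finset.mem_of_mem_erase ha
    exact Finset.mem_filter.mpr ⟨hsA has, Finset.ne_of_mem_erase ha, hindep a has p hps,
      hindep p hps a has⟩
  · intro t ht
    simp only [Finset.mem_coe, mem_indepSets, Finset.subset_iff, Finset.mem_filter] at ht
    obtain ⟨⟨htA, hcard⟩, hindep⟩ := ht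
    have hpt : p ∉ t := fun hp => (htA hp).2.1 rfl
    simp only [Finset.mem_coe, Finset.mem_filter, mem_indepSets, Finset.mem_insert_self,
      and_true, Finset.card_insert_of_notMem hpt, hcard, Finset.insert_subset_iff,
      Finset.forall_mem_insert]
    exact ⟨⟨hpA, fun a ha => (htA ha).1⟩, ⟨hpp, fun b hb => (htA hb).2.2.2⟩,
      fun a ha => ⟨(htA ha).2.2.1, hindep a ha⟩⟩
  · intro s hs
    exact Finset.insert_erase (Finset.mem_filter.mp hs).2
  · intro t ht
    exact Finset.erase_insert fun hp => ((Finset.mem_filter.mp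
      ((mem_indepSets.mp ht).1.1 hp)).2.1) rfl

end IndepSets

lemma Finset.card_eq_card_filter_mem_add_card_filter_mem_add {α : Type*} [DecidableEq α]
    {F : Finset (Finset α)} {p q : α} (h : ∀ s ∈ F, ¬ (p ∈ s ∧ q ∈ s)) :
    F.card = (F.filter (p ∈ ·)).card + (F.filter (q ∈ ·)).card +
      (F.filter fun s => p ∉ s ∧ q ∉ s).card := by
  have hq : (F.filter (p ∉ ·)).filter (q ∈ ·) = F.filter (q ∈ ·) := by
    rw [Finset.filter_filter]
    exact Finset.filter_congr fun s hs =>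
      ⟨And.right, fun hqs => ⟨fun hps => h s hs ⟨hps, hqs⟩, hqs⟩⟩
  rw [← Finset.card_filter_add_card_filter_not (s := F) (p ∈ ·),
    ← Finset.card_filter_add_card_filter_not (s := F.filter (p ∉ ·)) (q ∈ ·), hq,
    Finset.filter_filter, add_assoc]

def grid (n : ℕ) : Finset (ℕ × ℕ) := Finset.range 2 ×ˢ Finset.range n

lemma T_two_eq_card_indepSets (n k : ℕ) : T 2 n k = (indepSets Adj (grid n) k).card := rfl

lemma grid_succ_erase_erase (n : ℕ) : ((grid (n + 1)).erase (0, n)).erase (1, n) = grid n := by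
  ext ⟨x, y⟩
  simp only [grid, Finset.mem_erase, Finset.mem_product, Finset.mem_range, ne_eq, Prod.ext_iff]
  omega

lemma grid_filter_not_adj_last (n : ℕ) {i : ℕ} (hi : i < 2) :
    (grid (n + 2)).filter (fun a => a ≠ (i, n + 1) ∧ ¬ Adj a (i, n + 1) ∧ ¬ Adj (i, n + 1) a) =
      (grid (n + 1)).erase (i, n) := by
  ext ⟨x, y⟩
  simp only [grid, Adj, Finset.mem_filter, Finset.mem_erase, Finset.mem_product,
    Finset.mem_range, Prod.ext_iff, ne_eq]
  omega

-- The two cells of a column are adjacent, so an independent set meets each column at most once.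
lemma card_le_of_mem_indepSets_grid {n k : ℕ} {s : Finset (ℕ × ℕ)}
    (hs : s ∈ indepSets Adj (grid n) k) : k ≤ n := by
  obtain ⟨⟨hsub, rfl⟩, hindep⟩ := mem_indepSets.mp hs
  have hcol : Set.MapsTo Prod.snd (s : Set (ℕ × ℕ)) (Finset.range n : Set ℕ) := fun a ha =>
    (Finset.mem_product.mp (hsub ha)).2
  have hinj : Set.InjOn Prod.snd (s : Set (ℕ × ℕ)) := fun a ha b hb hab => by
    by_contra hne
    have ha2 := Finset.mem_product.mp (hsub ha)
    have hb2 := Finset.mem_product.mp (hsub hb)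
    simp only [Finset.mem_range] at ha2 hb2
    exact hindep a ha b hb (Or.inr ⟨hab, by grind⟩)
  simpa using Finset.card_le_card_of_injOn Prod.snd hcol hinj

lemma T_two_eq_zero_of_lt {n k : ℕ} (h : n < k) : T 2 n k = 0 := by
  rw [T_two_eq_card_indepSets, Finset.card_eq_zero, Finset.eq_empty_iff_forall_notMem]
  exact fun s hs => h.not_ge (card_le_of_mem_indepSets_grid hs)

/-- The last column is empty, or holds exactly one of its two cells, which then excludes its
neighbour in the previous column. -/
lemma T_two_add_two_succ (n k : ℕ) :
    T 2 (n + 2) (k + 1) = T 2 (n + 1) (k + 1) + T 2 (n + 1) k + T 2 n k := by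
  simp only [T_two_eq_card_indepSets]
  have not_both (m j : ℕ) :
      ∀ s ∈ indepSets Adj (grid (m + 1)) j, ¬ ((0, m) ∈ s ∧ (1, m) ∈ s) :=
    fun s hs h => (mem_indepSets.mp hs).2 _ h.1 _ h.2 (by simp [Adj])
  have without_last (m j : ℕ) :
      ((indepSets Adj (grid (m + 1)) j).filter fun s => (0, m) ∉ s ∧ (1, m) ∉ s).card =
        (indepSets Adj (grid m) j).card := by
    rw [← grid_succ_erase_erase m, indepSets_erase, indepSets_erase, Finset.filter_filter]
  have with_last {i : ℕ} (hi : i < 2) :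
      ((indepSets Adj (grid (n + 2)) (k + 1)).filter ((i, n + 1) ∈ ·)).card =
        ((indepSets Adj (grid (n + 1)) k).filter ((i, n) ∉ ·)).card := by
    rw [card_filter_mem_indepSets_succ (by simp [grid, hi]) (by simp [Adj]),
      grid_filter_not_adj_last n hi, indepSets_erase]
  have hF : (indepSets Adj (grid (n + 2)) (k + 1)).card = _ :=
    Finset.card_eq_card_filter_mem_add_card_filter_mem_add (not_both (n + 1) (k + 1))
  rw [with_last (by norm_num), with_last (by norm_num), without_last] at hF
  have hG := Finset.card_eq_card_filter_mem_add_card_filter_mem_add (not_both n k)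
  rw [without_last] at hG
  have hG0 := Finset.card_filter_add_card_filter_not (s := indepSets Adj (grid (n + 1)) k)
    ((0, n) ∈ ·)
  have hG1 := Finset.card_filter_add_card_filter_not (s := indepSets Adj (grid (n + 1)) k)
    ((1, n) ∈ ·)
  omega

lemma T_two_le_of_le {n k j : ℕ} (hkj : k ≤ j) (hn : n < k + j) : T 2 n j ≤ T 2 n k := by
  induction n using Nat.strong_induction_on generalizing k j with
  | _ n ih =>
    obtain rfl | hlt := hkj.eq_or_lt
    · exact le_rfl
    by_cases hj : n < j
    · simp [T_two_eq_zero_of_lt hj]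
    obtain ⟨m, rfl⟩ : ∃ m, n = m + 2 := ⟨n - 2, by omega⟩
    obtain ⟨k, rfl⟩ : ∃ k', k = k' + 1 := ⟨k - 1, by omega⟩
    obtain ⟨j, rfl⟩ : ∃ j', j = j' + 1 := ⟨j - 1, by omega⟩
    rw [T_two_add_two_succ, T_two_add_two_succ]
    have h1 : T 2 (m + 1) (j + 1) ≤ T 2 (m + 1) k := ih (m + 1) (by omega) (by omega) (by omega)
    have h2 : T 2 (m + 1) j ≤ T 2 (m + 1) (k + 1) := ih (m + 1) (by omega) (by omega) (by omega)
    have h3 : T 2 m j ≤ T 2 m k := ih m (by omega) (by omega) (by omega)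
    omega

theorem T2_even_row_step (k : ℕ) (hk : 1 ≤ k) :
    T 2 (2 * k) (k + 1) < T 2 (2 * k) k := by
  induction k, hk using Nat.le_induction with
  | base => decide
  | succ k _ ih =>
    rw [show 2 * (k + 1) = 2 * k + 2 by ring, T_two_add_two_succ (2 * k) (k + 1),
      T_two_add_two_succ (2 * k) k]
    have := T_two_le_of_le (n := 2 * k + 1) (k := k) (j := k + 1 + 1) (by omega) (by omega)
    omega
end

section
/- For every n ≥ 0, T(3,n;k) > 0 if and only if 0 ≤ k ≤ ⌊(3n+1)/2⌋. -/
/-!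
A set of squares of the `3 × n` grid without adjacent squares meets every `3 × 2` block of
consecutive columns in at most `3` squares and a single column in at most `2`; cutting the grid
into such blocks bounds it by `⌊(3n+1)/2⌋`. Conversely the checkerboard colour class of the
corner square has exactly `⌊(3n+1)/2⌋` squares, and every subset of it is again admissible.
-/

open Finset

def IsIndependent (s : Finset (ℕ × ℕ)) : Prop :=
  ∀ p ∈ s, ∀ q ∈ s, ¬ Adj p q

lemma IsIndependent.mono {s t : Finset (ℕ × ℕ)} (hs : IsIndependent s) (hts : t ⊆ s) :
    IsIndependent t :=
  fun p hp q hq => hs p (hts hp) q (hts hq)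

lemma T_pos_iff {m n k : ℕ} :
    0 < T m n k ↔ ∃ s ⊆ range m ×ˢ range n, s.card = k ∧ IsIndependent s := by
  simp only [T, card_pos, Finset.Nonempty, mem_filter, mem_powersetCard, and_assoc]
  rfl

lemma card_le_two_of_isIndependent_three_by_one :
    ∀ s ∈ (range 3 ×ˢ range 1).powerset, IsIndependent s → s.card ≤ 2 := by
  unfold IsIndependent; decide

lemma card_le_three_of_isIndependent_three_by_two :
    ∀ s ∈ (range 3 ×ˢ range 2).powerset, IsIndependent s → s.card ≤ 3 := by
  unfold IsIndependent; decide

lemma IsIndependent.image_sub_col {s : Finset (ℕ × ℕ)} (hs : IsIndependent s) {c : ℕ}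
    (hc : ∀ p ∈ s, c ≤ p.2) : IsIndependent (s.image fun p => (p.1, p.2 - c)) := by
  simp only [IsIndependent, mem_image]
  rintro _ ⟨p, hp, rfl⟩ _ ⟨q, hq, rfl⟩ hpq
  have := hc p hp
  have := hc q hq
  exact hs p hp q hq (by unfold Adj at hpq ⊢; omega)

lemma IsIndependent.card_le_three_of_two_cols {s : Finset (ℕ × ℕ)} (hs : IsIndependent s)
    {c : ℕ} (hsub : ∀ p ∈ s, p.1 < 3 ∧ c ≤ p.2 ∧ p.2 < c + 2) : s.card ≤ 3 := by
  have hinj : Set.InjOn (fun p : ℕ × ℕ => (p.1, p.2 - c)) s := fun p hp q hq hpq => by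
    have := hsub p hp
    have := hsub q hq
    simp only [Prod.mk.injEq] at hpq
    exact Prod.ext hpq.1 (by omega)
  rw [← card_image_of_injOn hinj]
  refine card_le_three_of_isIndependent_three_by_two _ ?_
    (hs.image_sub_col fun p hp => (hsub p hp).2.1)
  simp only [mem_powerset, subset_iff, mem_image, mem_product, mem_range]
  rintro _ ⟨p, hp, rfl⟩
  have := hsub p hp
  omega

theorem card_le_of_isIndependent_of_subset_range_three :
    ∀ (n : ℕ) {s : Finset (ℕ × ℕ)}, s ⊆ range 3 ×ˢ range n → IsIndependent s →
      s.card ≤ (3 * n + 1) / 2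
  | 0, s, hsub, _ => by simp_all
  | 1, s, hsub, hs => card_le_two_of_isIndependent_three_by_one s (mem_powerset.2 hsub) hs
  | n + 2, s, hsub, hs => by
    have hmem : ∀ p ∈ s, p.1 < 3 ∧ p.2 < n + 2 := fun p hp => by
      simpa only [mem_product, mem_range] using hsub hp
    have hleft : (s.filter (·.2 < n)).card ≤ (3 * n + 1) / 2 := by
      refine card_le_of_isIndependent_of_subset_range_three n (fun p hp => ?_)
        (hs.mono (filter_subset _ _))
      rw [mem_filter] at hp
      simpa only [mem_product, mem_range] using ⟨(hmem p hp.1).1, hp.2⟩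
    have hright : (s.filter (¬ ·.2 < n)).card ≤ 3 := by
      refine (hs.mono (filter_subset _ _)).card_le_three_of_two_cols (c := n) fun p hp => ?_
      rw [mem_filter] at hp
      have := hmem p hp.1
      omega
    have := card_filter_add_card_filter_not (s := s) (·.2 < n)
    omega

def checkerboard (m n : ℕ) : Finset (ℕ × ℕ) :=
  (range m ×ˢ range n).filter fun p => (p.1 + p.2) % 2 = 0

lemma isIndependent_checkerboard (m n : ℕ) : IsIndependent (checkerboard m n) := by
  simp only [IsIndependent, checkerboard, mem_filter, Adj]
  omega

lemma card_checkerboard_three (n : ℕ) : (checkerboard 3 n).card = (3 * n + 1) / 2 := by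
  rw [checkerboard, card_filter, sum_product_right]
  induction n with
  | zero => rfl
  | succ n ih =>
    rw [sum_range_succ, ih]
    simp only [sum_range_succ, sum_range_zero]
    split_ifs <;> omega

theorem T3_pos_iff (n k : ℕ) : 0 < T 3 n k ↔ k ≤ (3 * n + 1) / 2 := by
  rw [T_pos_iff]
  constructor
  · rintro ⟨s, hsub, rfl, hs⟩
    exact card_le_of_isIndependent_of_subset_range_three n hsub hs
  · intro hk
    rw [← card_checkerboard_three] at hk
    obtain ⟨s, hsub, rfl⟩ := exists_subset_card_eq hk
    exact ⟨s, hsub.trans (filter_subset _ _), rfl, (isIndependent_checkerboard 3 n).mono hsub⟩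
end

section
/- For each k ≥ 2, the polynomial p_k satisfying T(3,n;k) = p_k(n) for all n ≥ k has leading coefficient 3^k/k! and second coefficient -13·3^{k-2}/(2·(k-2)!); that is, p_k(n) = (3^k/k!)·n^k - (13·3^{k-2}/(2(k-2)!))·n^{k-1} + O(n^{k-2}). -/
/-!
Let `N_S(n, k)` count the independent `k`-sets of the `3 × n` grid that avoid the rows `S` in
the last column; `S` ranges over the five independent column patterns and `N_∅(n, k) = T(3,n;k)`.
Deleting the last column gives, for `k ≥ 2`, the transfer recurrence
`N_S(n + 1, k) = N_∅(n, k) + ∑ N_u(n, k - |u|)` over the nonempty patterns `u` disjoint from `S`.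
By strong induction on `k`, every `N_S(·, k)` is eventually a polynomial of degree `k`:
`N_∅(·, k)` is an antidifference of the (inductively known) sum over `u ≠ ∅`, and `N_S(·, k)` is
the shift `n ↦ n - 1` of `N_∅ + ∑`. Only the two top coefficients have to be tracked through the
finite difference and the shift; they are `3^k/k!` and `-k (13 (k - 1) + 6 |S|)/18 · 3^k/k!`.
-/

open Finset Filter Polynomial

namespace Polynomial

section CommSemiring

variable {R : Type*} [CommSemiring R]

lemma coeff_taylor_eq_sum (f : R[X]) (r : R) {k N : ℕ} (h : f.natDegree ≤ k + N) :
    (taylor r f).coeff k =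
      ∑ i ∈ range (N + 1), ((k + i).choose k : R) * f.coeff (k + i) * r ^ i := by
  rw [taylor_coeff, eval_eq_sum_range' (n := N + 1)
    ((natDegree_hasseDeriv_le f k).trans_lt (by omega))]
  simp only [hasseDeriv_coeff, add_comm k]

lemma coeff_taylor_of_natDegree_le {f : R[X]} {k : ℕ} (h : f.natDegree ≤ k) (r : R) :
    (taylor r f).coeff k = f.coeff k := by
  simp [coeff_taylor_eq_sum f r (k := k) (N := 0) h]

lemma coeff_taylor_of_natDegree_le_add_one {f : R[X]} {k : ℕ} (h : f.natDegree ≤ k + 1)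
    (r : R) : (taylor r f).coeff k = f.coeff k + (k + 1) * f.coeff (k + 1) * r := by
  simp [coeff_taylor_eq_sum f r h, sum_range_succ]

end CommSemiring

lemma coeff_taylor_of_natDegree_le_add_two {K : Type*} [Field K] [CharZero K] {f : K[X]}
    {k : ℕ} (h : f.natDegree ≤ k + 2) (r : K) :
    (taylor r f).coeff k = f.coeff k + (k + 1) * f.coeff (k + 1) * r
      + (k + 2) * (k + 1) / 2 * f.coeff (k + 2) * r ^ 2 := by
  simp only [coeff_taylor_eq_sum f r h, sum_range_succ, sum_range_zero, zero_add, add_zero,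
    Nat.choose_self, Nat.choose_succ_self_right,
    Nat.choose_symm_of_eq_add (n := k + 2) (a := k) (b := 2) rfl, Nat.cast_choose_two]
  push_cast
  ring

lemma natDegree_bernoulli_le (n : ℕ) : (bernoulli n).natDegree ≤ n :=
  natDegree_le_iff_coeff_eq_zero.2 fun i hi => by
    rw [coeff_bernoulli, if_neg (by exact_mod_cast hi.not_ge)]

-- `Bᵢ₊₁(x + 1) - Bᵢ₊₁(x) = (i + 1) xⁱ` for the Bernoulli polynomials.
lemma exists_taylor_one_sub_self_eq (r : ℚ[X]) :
    ∃ q : ℚ[X], q.natDegree ≤ r.natDegree + 1 ∧ taylor 1 q - q = r := by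
  refine ⟨∑ i ∈ range (r.natDegree + 1), C (r.coeff i / (i + 1)) * bernoulli (i + 1), ?_, ?_⟩
  · refine natDegree_sum_le_of_forall_le _ _ fun i hi => (natDegree_C_mul_le _ _).trans ?_
    exact (natDegree_bernoulli_le _).trans (by simpa using hi)
  · refine Polynomial.funext fun x => ?_
    simp only [eval_sub, taylor_eval, eval_finsetSum, eval_mul, eval_C, add_comm x,
      bernoulli_eval_one_add, ← sum_sub_distrib, eval_eq_sum_range (p := r)]
    refine sum_congr rfl fun i _ => ?_
    push_cast
    field_simp
    ring

lemma eq_of_eventually_eval_natCast_eq {R : Type*} [CommRing R] [IsDomain R] [CharZero R]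
    {p q : R[X]} (h : ∀ᶠ n : ℕ in atTop, p.eval (n : R) = q.eval (n : R)) : p = q := by
  refine eq_of_infinite_eval_eq p q ?_
  refine ((Nat.frequently_atTop_iff_infinite.1 h.frequently).image
    Nat.cast_injective.injOn).mono ?_
  rintro _ ⟨n, hn, rfl⟩
  exact hn

lemma eventually_eval_taylor_neg_one {R : Type*} [CommRing R] {f : ℕ → R} {g : R[X]}
    (h : ∀ᶠ n in atTop, f (n + 1) = g.eval (n : R)) :
    ∀ᶠ n in atTop, f n = (taylor (-1) g).eval (n : R) := by
  obtain ⟨N, hN⟩ := eventually_atTop.1 h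
  refine eventually_atTop.2 ⟨N + 1, fun n hn => ?_⟩
  obtain ⟨m, rfl⟩ : ∃ m, n = m + 1 := ⟨n - 1, by omega⟩
  simp [taylor_eval, hN m (by omega)]

lemma exists_eventually_eval_of_sub {f : ℕ → ℚ} {r : ℚ[X]}
    (h : ∀ᶠ n in atTop, f (n + 1) - f n = r.eval (n : ℚ)) :
    ∃ q : ℚ[X], q.natDegree ≤ r.natDegree + 1 ∧ taylor 1 q - q = r ∧
      ∀ᶠ n in atTop, f n = q.eval (n : ℚ) := by
  obtain ⟨q, hdeg, hq⟩ := exists_taylor_one_sub_self_eq r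
  obtain ⟨N, hN⟩ := eventually_atTop.1 h
  refine ⟨q + C (f N - q.eval (N : ℚ)), by rwa [natDegree_add_C], by simpa using hq,
    eventually_atTop.2 ⟨N, fun n hn => ?_⟩⟩
  induction n, hn using Nat.le_induction with
  | base => simp
  | succ n hn ih =>
    have hstep := congrArg (eval (n : ℚ)) hq
    simp only [eval_sub, taylor_eval] at hstep
    have := hN n hn
    simp only [eval_add, eval_C] at ih ⊢
    push_cast
    linarith

end Polynomial

namespace Grid3

variable {n k : ℕ}

def Indep (s : Finset (ℕ × ℕ)) : Prop := ∀ p ∈ s, ∀ q ∈ s, ¬ Adj p q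

instance : DecidablePred Indep := fun _ => by unfold Indep; infer_instance

@[simp] lemma indep_empty : Indep ∅ := by simp [Indep]

@[simp] lemma indep_singleton (p : ℕ × ℕ) : Indep {p} := by simp [Indep, Adj]

lemma adj_comm {p q : ℕ × ℕ} : Adj p q ↔ Adj q p := by
  unfold Adj; omega

def grid (n : ℕ) : Finset (ℕ × ℕ) := range 3 ×ˢ range n

def indepSets (S : Finset ℕ) (n k : ℕ) : Finset (Finset (ℕ × ℕ)) :=
  ((grid n).powersetCard k).filter fun s => Indep s ∧ ∀ i ∈ S, (i, n - 1) ∉ s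

lemma T_eq_card_indepSets (n k : ℕ) : T 3 n k = #(indepSets ∅ n k) := by
  unfold T indepSets grid Indep
  congr 1
  exact filter_congr (by simp)

lemma card_indepSets_zero (S : Finset ℕ) (n : ℕ) : #(indepSets S n 0) = 1 := by
  simp [indepSets, filter_singleton]

lemma card_indepSets_one {S : Finset ℕ} (hS : S ⊆ range 3) (hn : 1 ≤ n) :
    #(indepSets S n 1) = 3 * n - #S := by
  have : indepSets S n 1 = (grid n \ S ×ˢ {n - 1}).map ⟨singleton, singleton_injective⟩ := by
    ext s
    aesop (add simp [indepSets, powersetCard_one])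
  rw [this, card_map, card_sdiff_of_subset, grid, card_product, card_product]
  · simp [mul_comm]
  · exact product_subset_product hS (singleton_subset_iff.2 (mem_range.2 (by omega)))

def columnPatterns : Finset (Finset ℕ) := {∅, {0}, {1}, {2}, {0, 2}}

lemma mem_columnPatterns_iff {u : Finset ℕ} (hu : u ⊆ range 3) :
    u ∈ columnPatterns ↔ ∀ i ∈ u, i + 1 ∉ u := by
  have : ∀ u ∈ (range 3).powerset, u ∈ columnPatterns ↔ ∀ i ∈ u, i + 1 ∉ u := by decide
  exact this u (mem_powerset.2 hu)

lemma subset_range_of_mem_columnPatterns {u : Finset ℕ} (hu : u ∈ columnPatterns) :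
    u ⊆ range 3 := by
  revert u; decide

lemma card_le_two_of_mem_columnPatterns {u : Finset ℕ} (hu : u ∈ columnPatterns) : #u ≤ 2 := by
  revert u; decide

def rowsAt (s : Finset (ℕ × ℕ)) (j : ℕ) : Finset ℕ := (range 3).filter fun i => (i, j) ∈ s

lemma rowsAt_subset {s : Finset (ℕ × ℕ)} {j : ℕ} : rowsAt s j ⊆ range 3 := filter_subset _ _

lemma snd_lt_of_mem_grid {t : Finset (ℕ × ℕ)} (ht : t ⊆ grid n) {p : ℕ × ℕ} (hp : p ∈ t) :
    p.2 < n :=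
  mem_range.1 (mem_product.1 (ht hp)).2

lemma filter_subset_grid {s : Finset (ℕ × ℕ)} (hs : s ⊆ grid (n + 1)) :
    s.filter (·.2 < n) ⊆ grid n := fun p hp => by
  have := hs (mem_filter.1 hp).1
  simp only [grid, mem_product, mem_range, mem_filter] at this hp ⊢
  exact ⟨this.1, hp.2⟩

lemma filter_union_rowsAt {s : Finset (ℕ × ℕ)} (hs : s ⊆ grid (n + 1)) :
    s.filter (·.2 < n) ∪ rowsAt s n ×ˢ {n} = s := by
  ext ⟨i, j⟩
  have := @hs (i, j)
  simp only [grid, rowsAt, mem_union, mem_filter, mem_product, mem_range, mem_singleton]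
    at this ⊢
  constructor
  · rintro (⟨h, -⟩ | ⟨⟨-, h⟩, rfl⟩) <;> exact h
  · intro h
    have := this h
    by_cases hj : j < n
    · exact Or.inl ⟨h, hj⟩
    · exact Or.inr ⟨⟨this.1, by rwa [show j = n by omega] at h⟩, by omega⟩

lemma rowsAt_union_column {t : Finset (ℕ × ℕ)} (ht : t ⊆ grid n) {u : Finset ℕ}
    (hu : u ⊆ range 3) : rowsAt (t ∪ u ×ˢ {n}) n = u := by
  ext i
  simp only [rowsAt, mem_filter, mem_union, mem_product, mem_singleton, and_true]
  exact ⟨fun ⟨_, h⟩ => h.resolve_left fun h => (snd_lt_of_mem_grid ht h).false,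
    fun h => ⟨hu h, Or.inr h⟩⟩

lemma filter_union_column {t : Finset (ℕ × ℕ)} (ht : t ⊆ grid n) (u : Finset ℕ) :
    (t ∪ u ×ˢ {n}).filter (·.2 < n) = t := by
  ext p
  simp only [mem_filter, mem_union, mem_product, mem_singleton]
  exact ⟨fun ⟨h, hp⟩ => h.resolve_right fun h => hp.ne h.2,
    fun h => ⟨Or.inl h, snd_lt_of_mem_grid ht h⟩⟩

lemma card_union_column {t : Finset (ℕ × ℕ)} (ht : t ⊆ grid n) (u : Finset ℕ) :
    #(t ∪ u ×ˢ {n}) = #t + #u := by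
  rw [card_union_of_disjoint, card_product, card_singleton, mul_one]
  exact disjoint_left.2 fun p hp hpu =>
    (snd_lt_of_mem_grid ht hp).ne (mem_singleton.1 (mem_product.1 hpu).2)

lemma indep_union_column {t : Finset (ℕ × ℕ)} (ht : t ⊆ grid n) (u : Finset ℕ) :
    Indep (t ∪ u ×ˢ {n}) ↔ Indep t ∧ (∀ i ∈ u, i + 1 ∉ u) ∧ ∀ i ∈ u, (i, n - 1) ∉ t := by
  constructor
  · intro h
    refine ⟨fun p hp q hq => h p (by simp [hp]) q (by simp [hq]), fun i hi hi' => ?_,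
      fun i hi hit => ?_⟩
    · exact h (i, n) (by simp [hi]) (i + 1, n) (by simp [hi']) (Or.inr ⟨rfl, Or.inl rfl⟩)
    · have := snd_lt_of_mem_grid ht hit
      exact h (i, n - 1) (by simp [hit]) (i, n) (by simp [hi]) (Or.inl ⟨rfl, Or.inl (by omega)⟩)
  · rintro ⟨h, hu, hb⟩
    have mixed : ∀ p ∈ t, ∀ i ∈ u, ¬ Adj p (i, n) := by
      rintro ⟨p1, p2⟩ hp i hi hpi
      have := snd_lt_of_mem_grid ht hp
      obtain ⟨rfl, rfl⟩ : p1 = i ∧ p2 = n - 1 := by simp only [Adj] at hpi this; omega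
      exact hb p1 hi hp
    rintro p hp q hq hpq
    simp only [mem_union, mem_product, mem_singleton] at hp hq
    rcases hp with hp | ⟨hp, hpn⟩ <;> rcases hq with hq | ⟨hq, hqn⟩
    · exact h p hp q hq hpq
    · exact mixed p hp q.1 hq (by rwa [← hqn])
    · exact mixed q hq p.1 hp (by rw [adj_comm]; rwa [← hpn])
    · obtain ⟨p1, p2⟩ := p; obtain ⟨q1, q2⟩ := q
      simp only [Adj] at hpq hpn hqn
      rcases hpq with ⟨-, h'⟩ | ⟨-, rfl | rfl⟩
      · omega
      · exact hu p1 hp hq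
      · exact hu q1 hq hp

lemma union_column_mem_indepSets_iff {t : Finset (ℕ × ℕ)} (ht : t ⊆ grid n) {u : Finset ℕ}
    (hu : u ⊆ range 3) (huk : #u ≤ k) (S : Finset ℕ) :
    t ∪ u ×ˢ {n} ∈ indepSets S (n + 1) k ↔
      (u ∈ columnPatterns ∧ Disjoint u S) ∧ t ∈ indepSets u n (k - #u) := by
  have hsub : t ∪ u ×ˢ {n} ⊆ grid (n + 1) := by
    refine union_subset (ht.trans (product_subset_product_right ?_)) ?_
    · exact range_subset_range.2 n.le_succ
    · exact product_subset_product hu (by simp)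
  have hS : (∀ i ∈ S, (i, n) ∉ t ∪ u ×ˢ {n}) ↔ Disjoint u S := by
    simp only [disjoint_right, mem_union, mem_product, mem_singleton, and_true, not_or]
    exact forall₂_congr fun i _ => and_iff_right fun h => (snd_lt_of_mem_grid ht h).false
  simp only [indepSets, mem_filter, mem_powersetCard, card_union_column ht, Nat.add_sub_cancel,
    indep_union_column ht, hS, mem_columnPatterns_iff hu, hsub, ht, true_and]
  rw [show #t + #u = k ↔ #t = k - #u by omega]
  tauto

lemma card_indepSets_succ (S : Finset ℕ) (n : ℕ) (hk : 2 ≤ k) :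
    #(indepSets S (n + 1) k) =
      ∑ u ∈ columnPatterns with Disjoint u S, #(indepSets u n (k - #u)) := by
  rw [← card_sigma]
  refine card_bij' (fun s _ => ⟨rowsAt s n, s.filter (·.2 < n)⟩) (fun x _ => x.2 ∪ x.1 ×ˢ {n})
    (fun s hs => ?_) (fun x hx => ?_) (fun s hs => ?_) (fun x hx => ?_)
  · have hs' := mem_powersetCard.1 (mem_filter.1 hs).1
    have ht := filter_subset_grid hs'.1
    have hcard := card_union_column ht (rowsAt s n)
    rw [filter_union_rowsAt hs'.1] at hcard
    rw [← filter_union_rowsAt hs'.1, union_column_mem_indepSets_iff ht rowsAt_subset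
      (k := k) (by omega)] at hs
    simpa only [mem_sigma, mem_filter] using hs
  · simp only [mem_sigma, mem_filter] at hx
    have ht := (mem_powersetCard.1 (mem_filter.1 hx.2).1).1
    exact (union_column_mem_indepSets_iff ht (subset_range_of_mem_columnPatterns hx.1.1)
      ((card_le_two_of_mem_columnPatterns hx.1.1).trans hk) S).2 hx
  · exact filter_union_rowsAt (mem_powersetCard.1 (mem_filter.1 hs).1).1
  · simp only [mem_sigma, mem_filter] at hx
    have ht := (mem_powersetCard.1 (mem_filter.1 hx.2).1).1
    rw [rowsAt_union_column ht (subset_range_of_mem_columnPatterns hx.1.1),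
      filter_union_column ht]

def nonemptyFollowers (S : Finset ℕ) : Finset (Finset ℕ) :=
  (columnPatterns.filter (Disjoint · S)).erase ∅

lemma card_indepSets_succ_eq_add (S : Finset ℕ) (n : ℕ) (hk : 2 ≤ k) :
    #(indepSets S (n + 1) k) =
      #(indepSets ∅ n k) + ∑ u ∈ nonemptyFollowers S, #(indepSets u n (k - #u)) := by
  rw [card_indepSets_succ S n hk, nonemptyFollowers,
    ← add_sum_erase _ _ (by simp [columnPatterns] : ∅ ∈ columnPatterns.filter (Disjoint · S))]
  simp

lemma nonemptyFollowers_empty : nonemptyFollowers ∅ = {{0}, {1}, {2}, {0, 2}} := by decide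

lemma nonemptyFollowers_subset (S : Finset ℕ) : nonemptyFollowers S ⊆ nonemptyFollowers ∅ :=
  erase_subset_erase _ fun u hu => by simpa using (mem_filter.1 hu).1

lemma mem_columnPatterns_of_mem_nonemptyFollowers {u : Finset ℕ}
    (hu : u ∈ nonemptyFollowers ∅) : u ∈ columnPatterns := by
  revert u; decide

lemma card_of_mem_nonemptyFollowers {u : Finset ℕ} (hu : u ∈ nonemptyFollowers ∅) :
    #u = 1 ∨ #u = 2 := by
  revert u; decide

lemma card_filter_nonemptyFollowers_add_card :
    ∀ S ∈ columnPatterns, #((nonemptyFollowers S).filter (#· = 1)) + #S = 3 := by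
  decide

noncomputable def leading (k : ℕ) : ℚ := 3 ^ k / k.factorial

lemma leading_succ (k : ℕ) : leading (k + 1) = 3 / (k + 1) * leading k := by
  simp only [leading, pow_succ, Nat.factorial_succ]
  push_cast
  field_simp

lemma leading_add_two (m : ℕ) : leading (m + 2) = 3 / (m + 2) * leading (m + 1) := by
  rw [show m + 2 = m + 1 + 1 from rfl, leading_succ]
  push_cast
  ring

-- For `k ≥ 2` this is `-13 * 3 ^ (k - 2) / (2 * (k - 2)!) - s * 3 ^ (k - 1) / (k - 1)!`.
noncomputable def subleading (s k : ℕ) : ℚ := -(k * (13 * (k - 1) + 6 * s) / 18) * leading k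

lemma subleading_zero_add_two (j : ℕ) :
    subleading 0 (j + 2) = -(13 * 3 ^ j / (2 * j.factorial)) := by
  rw [subleading, leading_add_two, leading_succ, leading]
  push_cast
  field_simp
  ring

lemma subleading_add_two_recurrence (m : ℕ) :
    3 * subleading 1 (m + 1) + leading m - (m + 2) * (m + 1) / 2 * leading (m + 2) =
      (m + 1) * subleading 0 (m + 2) := by
  simp only [subleading, leading_add_two, leading_succ]
  push_cast
  field_simp
  ring

lemma subleading_add_two_shift (s m : ℕ) :
    subleading 0 (m + 2) + (3 - s) * leading (m + 1) - (m + 2) * leading (m + 2) =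
      subleading s (m + 2) := by
  simp only [subleading, leading_add_two]
  push_cast
  field_simp
  ring

structure IsExpansion (S : Finset ℕ) (k : ℕ) (q : ℚ[X]) : Prop where
  natDegree_le : q.natDegree ≤ k
  coeff_self : q.coeff k = leading k
  coeff_pred : k ≠ 0 → q.coeff (k - 1) = subleading #S k
  eventually_eq : ∀ᶠ n in atTop, (#(indepSets S n k) : ℚ) = q.eval (n : ℚ)

lemma isExpansion_zero (S : Finset ℕ) : IsExpansion S 0 1 where
  natDegree_le := by simp
  coeff_self := by simp [leading]
  coeff_pred := by simp
  eventually_eq := .of_forall fun n => by simp [card_indepSets_zero]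

lemma isExpansion_one {S : Finset ℕ} (hS : S ⊆ range 3) :
    IsExpansion S 1 (C 3 * X - C (#S : ℚ)) where
  natDegree_le := by compute_degree
  coeff_self := by simp [leading]
  coeff_pred _ := by
    rw [Nat.sub_self, coeff_sub, mul_coeff_zero, coeff_C_zero, coeff_C_zero, coeff_X_zero,
      subleading, leading, Nat.factorial_one]
    push_cast
    ring
  eventually_eq := eventually_atTop.2 ⟨1, fun n hn => by
    have : #S ≤ 3 * n := (card_le_card hS).trans (by simpa using hn)
    simp [card_indepSets_one hS hn, Nat.cast_sub this]⟩

section Step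

variable {m : ℕ} {Q : Finset ℕ → ℚ[X]}

lemma natDegree_sum_followers_le
    (hQ : ∀ u ∈ nonemptyFollowers ∅, IsExpansion u (m + 2 - #u) (Q u)) (S : Finset ℕ) :
    (∑ u ∈ nonemptyFollowers S, Q u).natDegree ≤ m + 1 := by
  refine natDegree_sum_le_of_forall_le _ _ fun u hu => ?_
  have hu := nonemptyFollowers_subset S hu
  have := (hQ u hu).natDegree_le
  rcases card_of_mem_nonemptyFollowers hu with h | h <;> omega

lemma eventually_sum_followers_eq
    (hQ : ∀ u ∈ nonemptyFollowers ∅, IsExpansion u (m + 2 - #u) (Q u)) (S : Finset ℕ) :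
    ∀ᶠ n in atTop, (∑ u ∈ nonemptyFollowers S, #(indepSets u n (m + 2 - #u)) : ℚ) =
      (∑ u ∈ nonemptyFollowers S, Q u).eval (n : ℚ) := by
  have := (eventually_all_finset _).2 fun u hu =>
    (hQ u (nonemptyFollowers_subset S hu)).eventually_eq
  filter_upwards [this] with n hn
  rw [eval_finsetSum]
  exact sum_congr rfl hn

lemma coeff_sum_followers_succ
    (hQ : ∀ u ∈ nonemptyFollowers ∅, IsExpansion u (m + 2 - #u) (Q u)) {S : Finset ℕ}
    (hS : S ∈ columnPatterns) :
    (∑ u ∈ nonemptyFollowers S, Q u).coeff (m + 1) = (3 - #S) * leading (m + 1) := by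
  have hterm : ∀ u ∈ nonemptyFollowers S,
      (Q u).coeff (m + 1) = if #u = 1 then leading (m + 1) else 0 := fun u hu => by
    have hu := nonemptyFollowers_subset S hu
    rcases card_of_mem_nonemptyFollowers hu with h | h
    · simpa [h] using (hQ u hu).coeff_self
    · have := (hQ u hu).natDegree_le
      rw [h] at this ⊢
      exact coeff_eq_zero_of_natDegree_lt (by omega)
  have hcount : (#((nonemptyFollowers S).filter (#· = 1)) : ℚ) = 3 - #S := by
    rw [eq_sub_iff_add_eq]
    exact_mod_cast card_filter_nonemptyFollowers_add_card S hS
  rw [finsetSum_coeff, sum_congr rfl hterm, sum_ite, sum_const_zero, add_zero, sum_const,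
    nsmul_eq_mul, hcount]

lemma coeff_sum_followers_empty
    (hQ : ∀ u ∈ nonemptyFollowers ∅, IsExpansion u (m + 2 - #u) (Q u)) :
    (∑ u ∈ nonemptyFollowers ∅, Q u).coeff m = 3 * subleading 1 (m + 1) + leading m := by
  have hsingle : ∀ i, {i} ∈ nonemptyFollowers ∅ → (Q {i}).coeff m = subleading 1 (m + 1) :=
    fun i hi => by simpa using (hQ {i} hi).coeff_pred
  have hpair : (Q {0, 2}).coeff m = leading m := by
    simpa using (hQ {0, 2} (by decide)).coeff_self
  rw [finsetSum_coeff, nonemptyFollowers_empty, sum_insert (by decide), sum_insert (by decide),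
    sum_insert (by decide), sum_singleton, hsingle 0 (by decide), hsingle 1 (by decide),
    hsingle 2 (by decide), hpair]
  ring

lemma exists_isExpansion_empty
    (hQ : ∀ u ∈ nonemptyFollowers ∅, IsExpansion u (m + 2 - #u) (Q u)) :
    ∃ q, IsExpansion ∅ (m + 2) q := by
  set R := ∑ u ∈ nonemptyFollowers ∅, Q u
  have hdiff : ∀ᶠ n in atTop,
      (#(indepSets ∅ (n + 1) (m + 2)) : ℚ) - #(indepSets ∅ n (m + 2)) = R.eval (n : ℚ) := by
    filter_upwards [eventually_sum_followers_eq hQ ∅] with n hn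
    rw [card_indepSets_succ_eq_add ∅ n (by omega)]
    push_cast
    rw [hn]
    ring
  obtain ⟨q, hdeg, hq, hev⟩ :=
    exists_eventually_eval_of_sub (f := fun n => (#(indepSets ∅ n (m + 2)) : ℚ)) hdiff
  have hdeg : q.natDegree ≤ m + 2 :=
    hdeg.trans (by simpa using natDegree_sum_followers_le hQ ∅)
  have htop : R.coeff (m + 1) = (m + 2) * q.coeff (m + 2) := by
    rw [← hq, coeff_sub, coeff_taylor_of_natDegree_le_add_one hdeg]
    push_cast
    ring
  have hsub : R.coeff m =
      (m + 1) * q.coeff (m + 1) + (m + 2) * (m + 1) / 2 * q.coeff (m + 2) := by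
    rw [← hq, coeff_sub, coeff_taylor_of_natDegree_le_add_two hdeg]
    ring
  rw [coeff_sum_followers_succ hQ (by decide), card_empty, Nat.cast_zero, sub_zero] at htop
  rw [coeff_sum_followers_empty hQ] at hsub
  have hq2 : q.coeff (m + 2) = leading (m + 2) := by
    rw [leading_add_two]
    field_simp
    linarith
  have hq1 : q.coeff (m + 1) = subleading 0 (m + 2) := by
    refine mul_left_cancel₀ (by positivity : (m + 1 : ℚ) ≠ 0) ?_
    rw [← subleading_add_two_recurrence, ← hq2]
    linarith
  exact ⟨q, hdeg, hq2, fun _ => by simpa using hq1, hev⟩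

lemma isExpansion_of_isExpansion_empty
    (hQ : ∀ u ∈ nonemptyFollowers ∅, IsExpansion u (m + 2 - #u) (Q u)) {q₀ : ℚ[X]}
    (h₀ : IsExpansion ∅ (m + 2) q₀) {S : Finset ℕ} (hS : S ∈ columnPatterns) :
    IsExpansion S (m + 2) (taylor (-1) (q₀ + ∑ u ∈ nonemptyFollowers S, Q u)) := by
  set g := q₀ + ∑ u ∈ nonemptyFollowers S, Q u
  have hR := natDegree_sum_followers_le hQ S
  have hdeg : g.natDegree ≤ m + 2 :=
    (natDegree_add_le _ _).trans (max_le h₀.natDegree_le (by omega))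
  have htop : g.coeff (m + 2) = leading (m + 2) := by
    rw [coeff_add, h₀.coeff_self, coeff_eq_zero_of_natDegree_lt (by omega), add_zero]
  have hsub : g.coeff (m + 1) = subleading 0 (m + 2) + (3 - #S) * leading (m + 1) := by
    rw [coeff_add, coeff_sum_followers_succ hQ hS, ← card_empty, ← h₀.coeff_pred (by omega)]
    rfl
  refine ⟨by rwa [natDegree_taylor], by rw [coeff_taylor_of_natDegree_le hdeg, htop],
    fun _ => ?_, eventually_eval_taylor_neg_one ?_⟩
  · rw [show m + 2 - 1 = m + 1 from rfl, coeff_taylor_of_natDegree_le_add_one hdeg, hsub, htop,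
      ← subleading_add_two_shift #S]
    push_cast
    ring
  · filter_upwards [h₀.eventually_eq, eventually_sum_followers_eq hQ S] with n h₀n hn
    rw [card_indepSets_succ_eq_add S n (by omega)]
    push_cast
    rw [h₀n, hn, eval_add]

end Step

theorem exists_isExpansion (k : ℕ) : ∀ S ∈ columnPatterns, ∃ q, IsExpansion S k q := by
  induction k using Nat.strong_induction_on with
  | _ k ih =>
  match k with
  | 0 => exact fun S _ => ⟨1, isExpansion_zero S⟩
  | 1 => exact fun S hS => ⟨_, isExpansion_one (subset_range_of_mem_columnPatterns hS)⟩
  | m + 2 =>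
    have : ∀ u ∈ nonemptyFollowers ∅, ∃ q, IsExpansion u (m + 2 - #u) q := fun u hu =>
      ih _ (by rcases card_of_mem_nonemptyFollowers hu with h | h <;> omega) u
        (mem_columnPatterns_of_mem_nonemptyFollowers hu)
    choose! Q hQ using this
    obtain ⟨q₀, h₀⟩ := exists_isExpansion_empty hQ
    exact fun S hS => ⟨_, isExpansion_of_isExpansion_empty hQ h₀ hS⟩

end Grid3

theorem T3_polynomial_coeffs_general (k : ℕ) (hk : 2 ≤ k) (p : Polynomial ℚ)
    (hval : ∀ n : ℕ, k ≤ n → (T 3 n k : ℚ) = p.eval (n : ℚ)) :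
    p.coeff k = 3 ^ k / (Nat.factorial k : ℚ) ∧
    p.coeff (k - 1) = -(13 * 3 ^ (k - 2) / (2 * (Nat.factorial (k - 2) : ℚ))) := by
  obtain ⟨j, rfl⟩ : ∃ j, k = j + 2 := ⟨k - 2, by omega⟩
  obtain ⟨q, hq⟩ := Grid3.exists_isExpansion (j + 2) ∅ (by decide)
  obtain rfl : p = q := Polynomial.eq_of_eventually_eval_natCast_eq <| by
    filter_upwards [hq.eventually_eq, eventually_ge_atTop (j + 2)] with n hqn hn
    rw [← hval n hn, Grid3.T_eq_card_indepSets, hqn]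
  refine ⟨hq.coeff_self, ?_⟩
  rw [hq.coeff_pred (by omega), card_empty, Grid3.subleading_zero_add_two, Nat.add_sub_cancel]

theorem T3_polynomial_coeffs (k : ℕ) (hk : 2 ≤ k) (p : Polynomial ℚ)
    (hdeg : p.degree = (k : ℕ))
    (hval : ∀ n : ℕ, k ≤ n → (T 3 n k : ℚ) = p.eval (n : ℚ)) :
    p.coeff k = 3 ^ k / (Nat.factorial k : ℚ) ∧
    p.coeff (k - 1) = -(13 * 3 ^ (k - 2) / (2 * (Nat.factorial (k - 2) : ℚ))) :=
  T3_polynomial_coeffs_general k hk p hval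
end
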